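/- The contribution $S_1$ of even residues to the sum $\sum_{d \bmod 2c, \gcd(d,c)=1} e(-nd^2/(4c) + l\bar d/c)$ satisfies: if $c$ is even then $S_1 = 0$, and if $c$ is odd then $S_1 = T_c(-n, \bar 2 l)$, where $\bar 2$ is the inverse of 2 modulo $c$ and $T_c(A,B) = \sum_{m \bmod c, (m,c)=1} e((Am^2 + B\bar m)/c)$. -/
import Mathlib


noncomputable def e (x : ℝ) : ℂ := Complex.exp (2 * Real.pi * Complex.I * x)

noncomputable def T (q : ℕ) (A B : ℤ) : ℂ :=
  ∑ n ∈ (Finset.range q).filter (fun n => Nat.Coprime n q),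
    e (((A * (n : ℤ) ^ 2 + B * (((n : ZMod q))⁻¹.val : ℤ) : ℤ) : ℝ) / (q : ℝ))

/-- The contribution of even residues  to . -/
noncomputable def S₁ (c : ℕ) (n l : ℤ) : ℂ :=
  ∑ d ∈ (Finset.range (2 * c)).filter (fun d => 2 ∣ d ∧ Nat.Coprime d c),
    e (((-(n * (d : ℤ) ^ 2) : ℤ) : ℝ) / (4 * (c : ℝ)) +
      ((l * (((d : ZMod c))⁻¹.val : ℤ) : ℤ) : ℝ) / (c : ℝ))

lemma e_add (x y : ℝ) : e (x + y) = e x * e y := by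
  simp only [e]
  rw [← Complex.exp_add]
  congr 1
  push_cast
  ring

lemma e_int (k : ℤ) : e k = 1 := by
  simp only [e]
  have h : (2 * (Real.pi : ℂ) * Complex.I * ((k : ℝ) : ℂ))
      = (k : ℂ) * (2 * Real.pi * Complex.I) := by push_cast; ring
  rw [h, Complex.exp_int_mul_two_pi_mul_I]

lemma e_cong (c : ℕ) (hc : 0 < c) (a b : ℤ) (h : ((a : ZMod c)) = (b : ZMod c)) :
    e ((a : ℝ) / c) = e ((b : ℝ) / c) := by
  have h' : a ≡ b [ZMOD (c : ℤ)] := (ZMod.intCast_eq_intCast_iff a b c).mp h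
  obtain ⟨k, hk⟩ := h'.dvd
  have hb : (b : ℝ) = a + c * k := by
    have : b = a + c * k := by linarith [hk]
    exact_mod_cast congrArg (fun z : ℤ => (z : ℝ)) this
  have hcne : (c : ℝ) ≠ 0 := by positivity
  have : (b : ℝ) / c = a / c + k := by rw [hb]; field_simp
  rw [this, e_add, e_int, mul_one]

theorem stmt16 (c : ℕ) (hc : 0 < c) (n l : ℤ) :
    (2 ∣ c → S₁ c n l = 0) ∧
    (¬ 2 ∣ c → S₁ c n l = T c (-n) (((((2 : ZMod c))⁻¹.val : ℤ)) * l)) := by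
  constructor
  · intro h2c
    rw [S₁, Finset.filter_false_of_mem, Finset.sum_empty]
    rintro d hd ⟨h2d, hcop⟩
    have h21 : (2 : ℕ) ∣ 1 := hcop ▸ Nat.dvd_gcd h2d h2c
    omega
  · intro h2c
    have hcop2 : Nat.Coprime 2 c :=
      (Nat.coprime_two_left).mpr (Nat.odd_iff.mpr (by omega))
    have hcne : (c : ℝ) ≠ 0 := by positivity
    rw [S₁, T]
    refine Finset.sum_nbij' (i := fun d => d / 2) (j := fun m => 2 * m) ?_ ?_ ?_ ?_ ?_
    · rintro d hd
      simp only [Finset.mem_filter, Finset.mem_range] at hd ⊢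
      obtain ⟨hlt, ⟨h2d, hcop⟩⟩ := hd
      obtain ⟨m, rfl⟩ := h2d
      refine ⟨by omega, ?_⟩
      simpa using hcop.coprime_dvd_left ⟨2, by ring⟩
    · rintro m hm
      simp only [Finset.mem_filter, Finset.mem_range] at hm ⊢
      exact ⟨by omega, ⟨m, rfl⟩, hcop2.mul hm.2⟩
    · rintro d hd
      simp only [Finset.mem_filter, Finset.mem_range] at hd
      obtain ⟨m, rfl⟩ := hd.2.1
      omega
    · intro m hm
      omega
    · rintro d hd
      simp only [Finset.mem_filter, Finset.mem_range] at hd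
      obtain ⟨hlt, ⟨h2d, hcopd⟩⟩ := hd
      obtain ⟨m, rfl⟩ := h2d
      have hmd : (2 * m) / 2 = m := by omega
      rw [hmd]
      have hcopm : Nat.Coprime m c := by
        simpa using hcopd.coprime_dvd_left ⟨2, by ring⟩
      -- split both sides as products
      have hsplit : ((-n * (m : ℤ) ^ 2 +
          ((2 : ZMod c)⁻¹.val : ℤ) * l * (((m : ZMod c))⁻¹.val : ℤ) : ℤ) : ℝ) / c
          = ((-(n * (m : ℤ) ^ 2) : ℤ) : ℝ) / c +
            ((((2 : ZMod c)⁻¹.val : ℤ) * l * (((m : ZMod c))⁻¹.val : ℤ) : ℤ) : ℝ) / c := by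
        push_cast
        ring
      rw [hsplit, e_add, e_add]
      congr 1
      · congr 1
        push_cast
        field_simp
        ring
      · apply e_cong c hc
        -- key: inverse of 2m is inverse of 2 times inverse of m
        have h1 := ZMod.coe_mul_inv_eq_one (2 * m) hcopd
        have h2 := ZMod.coe_mul_inv_eq_one 2 hcop2
        have h3 := ZMod.coe_mul_inv_eq_one m hcopm
        have key : ((2 * m : ℕ) : ZMod c)⁻¹
            = ((2 : ℕ) : ZMod c)⁻¹ * ((m : ℕ) : ZMod c)⁻¹ := by
          calc ((2 * m : ℕ) : ZMod c)⁻¹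
              = (((2 : ℕ) : ZMod c) * ((2 : ℕ) : ZMod c)⁻¹ *
                (((m : ℕ) : ZMod c) * ((m : ℕ) : ZMod c)⁻¹)) * ((2 * m : ℕ) : ZMod c)⁻¹ := by
                rw [h2, h3]; ring
            _ = (((2 : ℕ) : ZMod c)⁻¹ * ((m : ℕ) : ZMod c)⁻¹) *
                (((2 * m : ℕ) : ZMod c) * ((2 * m : ℕ) : ZMod c)⁻¹) := by push_cast; ring
            _ = ((2 : ℕ) : ZMod c)⁻¹ * ((m : ℕ) : ZMod c)⁻¹ := by rw [h1, mul_one]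
        have : NeZero c := ⟨hc.ne'⟩
        push_cast at key
        push_cast [ZMod.natCast_val, ZMod.cast_id]
        rw [key]
        ring
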